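/- Let F be a field, m and E finite types, D a matrix over F with rows indexed by m and columns indexed by E; for S ⊆ E let r(S) be the rank of the submatrix of columns in S, and let T_D(X,Y) = Σ_{S ⊆ E} X^{r(E) − r(S)} · Y^{|S| − r(S)}. If σ ∈ E is a bridge of D, i.e., r(E ∖ {σ}) = r(E) − 1, then T_D(X,Y) = (X + 1) · T_{D/σ}(X,Y), where D/σ is the contraction of D by σ. -/

import Mathlib

/-!
A bridge `σ` has `v σ` outside the span of every set of other columns. So for `T ∌ σ` adding
`σ` raises the rank by one, while the quotient by `v σ` is injective on the span of `T` and keeps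
its rank. Pairing `T` with `insert σ T`, the two summands of `T_v` add up to `X + 1` times the
summand of `T` in the Tutte polynomial of the contraction.
-/

open MvPolynomial

/-- The rank of the family of vectors `(v σ)_{σ ∈ S}`. -/
noncomputable def famRank (F : Type*) [Field F] {N : Type*} [AddCommGroup N] [Module F N]
    {E : Type*} (v : E → N) (S : Finset E) : ℕ :=
  Module.finrank F (Submodule.span F (v '' (S : Set E)))

/-- The corank–nullity (Tutte–Krushkal–Renardy) polynomial of a family of vectors:
`T_v(X,Y) = Σ_{S ⊆ E} X^(r(E) − r(S)) · Y^(|S| − r(S))`. -/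
noncomputable def famTutte (F : Type*) [Field F] {N : Type*} [AddCommGroup N] [Module F N]
    {E : Type*} [Fintype E] (v : E → N) : MvPolynomial (Fin 2) ℤ :=
  ∑ S : Finset E,
    X 0 ^ (famRank F v Finset.univ - famRank F v S) * X 1 ^ (S.card - famRank F v S)


open Finset

theorem Submodule.finrank_map_eq_of_disjoint_ker {F : Type*} [Field F] {M N : Type*}
    [AddCommGroup M] [Module F M] [AddCommGroup N] [Module F N] (f : M →ₗ[F] N)
    {W : Submodule F M} (h : Disjoint W (LinearMap.ker f)) :
    Module.finrank F (W.map f) = Module.finrank F W := by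
  rw [← LinearMap.range_domRestrict]
  exact (LinearEquiv.ofInjective _ (LinearMap.injective_domRestrict_iff.mpr h)).finrank_eq.symm

theorem Finset.sum_univ_finset_eq_sum_finset_subtype_ne {E M : Type*} [Fintype E] [DecidableEq E]
    [AddCommMonoid M] (σ : E) (f : Finset E → M) :
    ∑ S : Finset E, f S = ∑ T : Finset {x // x ≠ σ},
      (f (T.map (Function.Embedding.subtype _))
        + f (insert σ (T.map (Function.Embedding.subtype _)))) := by
  rw [← powerset_univ, ← insert_erase (mem_univ σ), sum_powerset_insert (notMem_erase σ _),
    ← sum_add_distrib, ← filter_ne', ← univ_map_subtype, map_eq_image, powerset_image,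
    sum_image (image_injOn_powerset_of_injOn (Function.Embedding.subtype _).injective.injOn),
    powerset_univ]
  simp only [map_eq_image]

theorem add_one_mul_pow_sub_mul_pow_sub {R : Type*} [CommSemiring R] (x y : R) {r e : ℕ} (c : ℕ)
    (h : r ≤ e) :
    (x + 1) * (x ^ (e - r) * y ^ (c - r))
      = x ^ (e + 1 - r) * y ^ (c - r) + x ^ (e + 1 - (r + 1)) * y ^ (c + 1 - (r + 1)) := by
  rw [Nat.add_sub_add_right, Nat.add_sub_add_right, Nat.sub_add_comm h, pow_succ]
  ring

section famRank

variable {F : Type*} [Field F] {N : Type*} [AddCommGroup N] [Module F N] {E : Type*} (v : E → N)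

instance finiteDimensional_span_image_finset (S : Finset E) :
    FiniteDimensional F (Submodule.span F (v '' (S : Set E))) :=
  FiniteDimensional.span_of_finite F (S.finite_toSet.image v)

variable {v}

theorem famRank_mono {S T : Finset E} (h : S ⊆ T) : famRank F v S ≤ famRank F v T :=
  Submodule.finrank_mono (Submodule.span_mono (Set.image_mono (coe_subset.mpr h)))

variable [DecidableEq E]

theorem famRank_insert_of_mem_span {a : E} {S : Finset E}
    (h : v a ∈ Submodule.span F (v '' (S : Set E))) :
    famRank F v (insert a S) = famRank F v S := by
  rw [famRank, coe_insert, Set.image_insert_eq, Submodule.span_insert_eq_span h, famRank]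

theorem famRank_insert_of_notMem_span {a : E} {S : Finset E}
    (h : v a ∉ Submodule.span F (v '' (S : Set E))) :
    famRank F v (insert a S) = famRank F v S + 1 := by
  have ha : v a ≠ 0 := fun h0 => h (h0 ▸ Submodule.zero_mem _)
  have hdisj := (Submodule.disjoint_span_singleton' ha).mpr h
  have hsum := Submodule.finrank_sup_add_finrank_inf_eq
    (Submodule.span F (v '' (S : Set E))) (Submodule.span F {v a})
  rw [hdisj.eq_bot, finrank_bot, add_zero, finrank_span_singleton ha] at hsum
  rw [famRank, coe_insert, Set.image_insert_eq, Submodule.span_insert, sup_comm, hsum, famRank]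

end famRank

section contraction

variable {F : Type*} [Field F] {N : Type*} [AddCommGroup N] [Module F N] {E : Type*}

theorem famRank_comp_embedding {E' : Type*} (v : E → N) (f : E' ↪ E) (S : Finset E') :
    famRank F (v ∘ f) S = famRank F v (S.map f) := by
  rw [famRank, famRank, coe_map, Set.image_comp]

theorem famRank_mkQ_of_notMem_span {v : E → N} {a : N} {S : Finset E}
    (h : a ∉ Submodule.span F (v '' (S : Set E))) :
    famRank F (fun x => (Submodule.span F {a}).mkQ (v x)) S = famRank F v S := by
  have ha : a ≠ 0 := fun h0 => h (h0 ▸ Submodule.zero_mem _)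
  rw [famRank, ← Set.image_image (Submodule.span F {a}).mkQ, ← Submodule.map_span,
    Submodule.finrank_map_eq_of_disjoint_ker, famRank]
  rw [Submodule.ker_mkQ]
  exact (Submodule.disjoint_span_singleton' ha).mpr h

theorem famTutte_eq_mul_famTutte_contract_of_bridge [Fintype E] [DecidableEq E] (v : E → N)
    (σ : E) (hbridge : famRank F v (univ.erase σ) + 1 = famRank F v univ) :
    famTutte F v = (X 0 + 1) * famTutte F (fun τ : {x // x ≠ σ} =>
      (Submodule.span F {v σ}).mkQ (v τ)) := by
  set ι := Function.Embedding.subtype fun x : E => x ≠ σ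
  have hσ : v σ ∉ Submodule.span F (v '' ((univ.erase σ : Finset E) : Set E)) := by
    intro hmem
    have := famRank_insert_of_mem_span hmem
    rw [insert_erase (mem_univ σ)] at this
    omega
  have hsub (T : Finset {x // x ≠ σ}) : T.map ι ⊆ univ.erase σ := by
    intro x hx
    obtain ⟨y, -, rfl⟩ := mem_map.mp hx
    exact mem_erase.mpr ⟨y.2, mem_univ _⟩
  have hσT (T : Finset {x // x ≠ σ}) : v σ ∉ Submodule.span F (v '' (T.map ι : Set E)) :=
    fun h => hσ (Submodule.span_mono (Set.image_mono (coe_subset.mpr (hsub T))) h)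
  have hrank (T : Finset {x // x ≠ σ}) :
      famRank F (fun τ : {x // x ≠ σ} => (Submodule.span F {v σ}).mkQ (v τ)) T
        = famRank F v (T.map ι) := by
    rw [← famRank_comp_embedding]
    refine famRank_mkQ_of_notMem_span (v := v ∘ ι) ?_
    rw [Set.image_comp, ← coe_map]
    exact hσT T
  have huniv : (univ : Finset {x // x ≠ σ}).map ι = univ.erase σ := by
    rw [univ_map_subtype, filter_ne']
  rw [famTutte, famTutte, sum_univ_finset_eq_sum_finset_subtype_ne σ, mul_sum]
  refine sum_congr rfl fun T _ => ?_
  rw [hrank, hrank, huniv, ← hbridge, famRank_insert_of_notMem_span (hσT T),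
    card_insert_of_notMem (by simp), card_map]
  exact (add_one_mul_pow_sub_mul_pow_sub _ _ _ (famRank_mono (hsub T))).symm

end contraction

theorem statement10_general {F : Type*} [Field F] {m E : Type*} [Fintype E]
    [DecidableEq E] (D : Matrix m E F) (σ : E)
    (hbridge : famRank F (fun τ i => D i τ) (Finset.univ.erase σ) + 1
      = famRank F (fun τ i => D i τ) (Finset.univ : Finset E)) :
    famTutte F (fun τ i => D i τ)
      = (X 0 + 1) * famTutte F (fun τ : {x : E // x ≠ σ} =>
          (Submodule.span F {fun i => D i σ}).mkQ (fun i => D i (τ : E))) :=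
  famTutte_eq_mul_famTutte_contract_of_bridge _ σ hbridge

/-- if `σ ∈ E` is a bridge of `D` (`r(E ∖ {σ}) = r(E) − 1`, i.e.
`r(E ∖ {σ}) + 1 = r(E)`), then `T_D(X,Y) = (X + 1) · T_{D/σ}(X,Y)`, where `D/σ` is the
contraction of `D` by `σ`: the columns `E ∖ {σ}` of `D` composed with the quotient map
`F^m → F^m / span(Dσ)`. -/
theorem statement10 {F : Type*} [Field F] {m E : Type*} [Fintype m] [Fintype E]
    [DecidableEq E] (D : Matrix m E F) (σ : E)
    (hbridge : famRank F (fun τ i => D i τ) (Finset.univ.erase σ) + 1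
      = famRank F (fun τ i => D i τ) (Finset.univ : Finset E)) :
    famTutte F (fun τ i => D i τ)
      = (X 0 + 1) * famTutte F (fun τ : {x : E // x ≠ σ} =>
          (Submodule.span F {fun i => D i σ}).mkQ (fun i => D i (τ : E))) :=
  statement10_general D σ hbridge
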